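/- (Lemma on invariance of cones, part (b).) Suppose (X',Y') is a valid ping-pong table. Then the lines ℝ·u and ℝ·v spanned by the vectors u = (1,-2,1) and v = (1,0,3) are contained in the topological closure of X' in ℝ³. -/

import Mathlib

open Matrix Filter Topology

/-- The matrix `R`. -/
def R : Matrix (Fin 3) (Fin 3) ℝ := !![0,0,-1; 1,0,-1; 0,1,-1]

/-- The matrix `T`. -/
def T : Matrix (Fin 3) (Fin 3) ℝ := !![-1,0,0; 2,1,0; -4,0,1]

/-- The open cone generated by three vectors in `ℝ³`. -/
def cone3 (u' v' w' : Fin 3 → ℝ) : Set (Fin 3 → ℝ) :=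
  {p | ∃ a b c : ℝ, 0 < a ∧ 0 < b ∧ 0 < c ∧ p = a • u' + b • v' + c • w'}

/-- `X' = C' ∪ (−C')` where `C'` is the open cone generated by `u', v', w'`. -/
def Xset (u' v' w' : Fin 3 → ℝ) : Set (Fin 3 → ℝ) :=
  cone3 u' v' w' ∪ (-(cone3 u' v' w'))

/-- `Y' = R·X' ∪ R²·X' ∪ R³·X'`. -/
def Yset (u' v' w' : Fin 3 → ℝ) : Set (Fin 3 → ℝ) :=
  R.mulVec '' Xset u' v' w' ∪ (R ^ 2).mulVec '' Xset u' v' w' ∪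
    (R ^ 3).mulVec '' Xset u' v' w'

/-- `(X',Y')` is a valid ping-pong table: `X' ∩ Y' = ∅` and `T·Y' ⊆ X'`
(the condition that `R, R², R³` map `X'` into `Y'` holds by construction). -/
def IsValidTable (u' v' w' : Fin 3 → ℝ) : Prop :=
  Xset u' v' w' ∩ Yset u' v' w' = ∅ ∧
    T.mulVec '' Yset u' v' w' ⊆ Xset u' v' w'

-- ### Auxiliary lemmas

lemma smul_mem_cone3 {u' v' w' : Fin 3 → ℝ} {r : ℝ} (hr : 0 < r) {p : Fin 3 → ℝ}
    (hp : p ∈ cone3 u' v' w') : r • p ∈ cone3 u' v' w' := by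
  obtain ⟨a, b, c, ha, hb, hc, rfl⟩ := hp
  exact ⟨r*a, r*b, r*c, by positivity, by positivity, by positivity, by
    simp [smul_add, smul_smul]⟩

lemma smul_mem_X {u' v' w' : Fin 3 → ℝ} {r : ℝ} (hr : r ≠ 0) {p : Fin 3 → ℝ}
    (hp : p ∈ Xset u' v' w') : r • p ∈ Xset u' v' w' := by
  rcases hp with hp | hp
  · rcases hr.lt_or_gt with h | h
    · right
      have : (-r) • p ∈ cone3 u' v' w' := smul_mem_cone3 (by linarith) hp
      simpa [Set.mem_neg, neg_smul] using this
    · exact Or.inl (smul_mem_cone3 h hp)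
  · rw [Set.mem_neg] at hp
    rcases hr.lt_or_gt with h | h
    · left
      have : (-r) • (-p) ∈ cone3 u' v' w' := smul_mem_cone3 (by linarith) hp
      simpa [neg_smul, smul_neg] using this
    · right
      have : r • (-p) ∈ cone3 u' v' w' := smul_mem_cone3 h hp
      simpa [Set.mem_neg, smul_neg] using this

lemma zero_mem_closureX (u' v' w' : Fin 3 → ℝ) : (0 : Fin 3 → ℝ) ∈ closure (Xset u' v' w') := by
  have hx0 : (u' + v' + w') ∈ Xset u' v' w' :=
    Or.inl ⟨1, 1, 1, one_pos, one_pos, one_pos, by simp⟩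
  have ht : Tendsto (fun n : ℕ => (1/((n:ℝ)+1)) • (u' + v' + w')) atTop
      (𝓝 (0 : Fin 3 → ℝ)) := by
    have h : Tendsto (fun n : ℕ => 1 / ((n:ℝ) + 1)) atTop (𝓝 0) :=
      tendsto_one_div_add_atTop_nhds_zero_nat
    simpa using h.smul_const (u' + v' + w')
  refine mem_closure_of_tendsto ht (Eventually.of_forall fun n => ?_)
  exact smul_mem_X (by positivity) hx0

lemma smul_mem_closureX (u' v' w' : Fin 3 → ℝ) (r : ℝ) {p : Fin 3 → ℝ}
    (hp : p ∈ closure (Xset u' v' w')) : r • p ∈ closure (Xset u' v' w') := by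
  rcases eq_or_ne r 0 with rfl | hr
  · simpa using zero_mem_closureX u' v' w'
  · have hcont : Continuous fun q : Fin 3 → ℝ => r • q := continuous_const_smul r
    have h1 : r • p ∈ (fun q : Fin 3 → ℝ => r • q) '' closure (Xset u' v' w') := ⟨p, hp, rfl⟩
    have h2 := image_closure_subset_closure_image (s := Xset u' v' w') hcont h1
    refine closure_mono ?_ h2
    rintro q ⟨q', hq', rfl⟩
    exact smul_mem_X hr hq'

lemma line_subset_closureX (u' v' w' : Fin 3 → ℝ)
    (A : Matrix (Fin 3) (Fin 3) ℝ) (u0 cv : Fin 3 → ℝ)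
    (hA : ∀ p ∈ Xset u' v' w', A.mulVec p ∈ Xset u' v' w')
    (hN2 : ∀ p : Fin 3 → ℝ, (A - 1).mulVec ((A - 1).mulVec p) = (cv ⬝ᵥ p) • u0)
    (hNu : (A - 1).mulVec u0 = 0)
    (x : Fin 3 → ℝ) (hx : x ∈ Xset u' v' w') (hcx : cv ⬝ᵥ x ≠ 0) :
    (Submodule.span ℝ {u0} : Set (Fin 3 → ℝ)) ⊆ closure (Xset u' v' w') := by
  set N := A - 1 with hNdef
  have hAmul : ∀ p : Fin 3 → ℝ, A.mulVec p = p + N.mulVec p := by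
    intro p
    have hA1 : A = 1 + N := by rw [hNdef]; abel
    rw [hA1, Matrix.add_mulVec, Matrix.one_mulVec]
  have hyform : ∀ n : ℕ, (A ^ n).mulVec x
      = x + (n:ℝ) • N.mulVec x + (((n:ℝ) * ((n:ℝ)-1) / 2) * (cv ⬝ᵥ x)) • u0 := by
    intro n
    induction n with
    | zero => simp [Matrix.one_mulVec]
    | succ n ih =>
      rw [pow_succ', ← Matrix.mulVec_mulVec, ih, hAmul]
      rw [Matrix.mulVec_add, Matrix.mulVec_add, Matrix.mulVec_smul, Matrix.mulVec_smul,
        hN2, hNu, smul_zero]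
      push_cast
      match_scalars <;> ring
  have hmem : ∀ n : ℕ, (A ^ n).mulVec x ∈ Xset u' v' w' := by
    intro n
    induction n with
    | zero => simpa [Matrix.one_mulVec] using hx
    | succ n ih =>
      rw [pow_succ', ← Matrix.mulVec_mulVec]
      exact hA _ ih
  have key : (cv ⬝ᵥ x) • u0 ∈ closure (Xset u' v' w') := by
    have hfX : ∀ n : ℕ, n ≥ 2 →
        (2 / ((n:ℝ) * ((n:ℝ)-1))) • (A ^ n).mulVec x ∈ Xset u' v' w' := by
      intro n hn
      have h2n : (2:ℝ) ≤ (n:ℝ) := by exact_mod_cast hn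
      have h1 : (0:ℝ) < (n:ℝ) * ((n:ℝ)-1) := by nlinarith
      exact smul_mem_X (by positivity) (hmem n)
    have hb : Tendsto (fun n : ℕ => ((n:ℝ) * ((n:ℝ)-1))) atTop atTop := by
      have h1 : Tendsto (fun n : ℕ => (n:ℝ)) atTop atTop := tendsto_natCast_atTop_atTop
      have h2 : Tendsto (fun n : ℕ => ((n:ℝ)-1)) atTop atTop :=
        tendsto_atTop_add_const_right atTop (-1) h1
      simpa [sub_eq_add_neg] using h1.atTop_mul_atTop₀ h2
    have hb' : Tendsto (fun n : ℕ => ((n:ℝ)-1)) atTop atTop :=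
      tendsto_atTop_add_const_right atTop (-1) tendsto_natCast_atTop_atTop
    have h1 : Tendsto (fun n : ℕ => (2:ℝ) / ((n:ℝ) * ((n:ℝ)-1))) atTop (𝓝 0) :=
      tendsto_const_nhds.div_atTop hb
    have h2 : Tendsto (fun n : ℕ => (2:ℝ) / ((n:ℝ)-1)) atTop (𝓝 0) :=
      tendsto_const_nhds.div_atTop hb'
    have hg : Tendsto (fun n : ℕ => (2 / ((n:ℝ) * ((n:ℝ)-1))) • x
        + (2 / ((n:ℝ)-1)) • N.mulVec x + (cv ⬝ᵥ x) • u0) atTop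
        (𝓝 ((cv ⬝ᵥ x) • u0)) := by
      have := ((h1.smul_const x).add (h2.smul_const (N.mulVec x))).add
        (tendsto_const_nhds (x := (cv ⬝ᵥ x) • u0))
      simpa using this
    have htend : Tendsto (fun n : ℕ => (2 / ((n:ℝ) * ((n:ℝ)-1))) • (A ^ n).mulVec x)
        atTop (𝓝 ((cv ⬝ᵥ x) • u0)) := by
      refine Tendsto.congr' ?_ hg
      filter_upwards [eventually_ge_atTop 2] with n hn
      have h2n : (2:ℝ) ≤ (n:ℝ) := by exact_mod_cast hn
      have hn0 : (n:ℝ) ≠ 0 := by linarith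
      have hn1 : (n:ℝ) - 1 ≠ 0 := by intro h; nlinarith [h]
      rw [hyform n]
      match_scalars <;> field_simp <;> ring
    exact mem_closure_of_tendsto htend (Filter.eventually_atTop.2 ⟨2, hfX⟩)
  intro p hp
  obtain ⟨r, rfl⟩ := Submodule.mem_span_singleton.mp hp
  have h := smul_mem_closureX u' v' w' (r / (cv ⬝ᵥ x)) key
  rwa [smul_smul, div_mul_cancel₀ _ hcx] at h

lemma exists_good (u' v' w' : Fin 3 → ℝ) (hind : LinearIndependent ℝ ![u', v', w'])
    (cv : Fin 3 → ℝ) (hcv : cv ≠ 0) :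
    ∃ x ∈ Xset u' v' w', cv ⬝ᵥ x ≠ 0 := by
  have hspan : Submodule.span ℝ (Set.range ![u', v', w']) = ⊤ :=
    hind.span_eq_top_of_card_eq_finrank (by simp [Module.finrank_fin_fun])
  let f : (Fin 3 → ℝ) →ₗ[ℝ] ℝ :=
    { toFun := fun p => cv ⬝ᵥ p
      map_add' := fun p q => dotProduct_add cv p q
      map_smul' := fun a p => by simp [dotProduct_smul, smul_eq_mul] }
  have hex : ∃ i : Fin 3, cv ⬝ᵥ (![u', v', w'] i) ≠ 0 := by
    by_contra hcon
    push_neg at hcon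
    have hle : Submodule.span ℝ (Set.range ![u', v', w']) ≤ LinearMap.ker f := by
      rw [Submodule.span_le]
      rintro y ⟨i, rfl⟩
      exact hcon i
    rw [hspan, top_le_iff] at hle
    have hf0 : f = 0 := LinearMap.ker_eq_top.mp hle
    apply hcv
    funext j
    have hj : f (Pi.single j 1) = 0 := by rw [hf0]; rfl
    have hj2 : cv ⬝ᵥ Pi.single j 1 = 0 := hj
    rw [dotProduct_single, mul_one] at hj2
    exact hj2
  obtain ⟨i, hi⟩ := hex
  set σ : ℝ := cv ⬝ᵥ (![u', v', w'] i) with hσ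
  set s0 : ℝ := cv ⬝ᵥ (u' + v' + w') with hs0
  obtain ⟨t, ht, hts⟩ : ∃ t : ℝ, 0 < t ∧ s0 + t * σ ≠ 0 := by
    rcases eq_or_ne (s0 + σ) 0 with h | h
    · refine ⟨2, two_pos, ?_⟩
      have : s0 + 2 * σ = (s0 + σ) + σ := by ring
      rw [this, h, zero_add]; exact hi
    · exact ⟨1, one_pos, by simpa using h⟩
  refine ⟨(u' + v' + w') + t • (![u', v', w'] i), ?_, ?_⟩
  · left
    fin_cases i
    · exact ⟨1 + t, 1, 1, by linarith, one_pos, one_pos, by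
        show u' + v' + w' + t • u' = _; module⟩
    · exact ⟨1, 1 + t, 1, one_pos, by linarith, one_pos, by
        show u' + v' + w' + t • v' = _; module⟩
    · exact ⟨1, 1, 1 + t, one_pos, one_pos, by linarith, by
        show u' + v' + w' + t • w' = _; module⟩
  · rw [dotProduct_add, dotProduct_smul, smul_eq_mul]
    exact hts

/-- Part (b) of the lemma: for a valid ping-pong table, the lines spanned by
`u = (1,-2,1)` and `v = (1,0,3)` are contained in the closure of `X'`. -/
theorem cone_invariance_b (u' v' w' : Fin 3 → ℝ)
    (hind : LinearIndependent ℝ ![u', v', w'])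
    (hvalid : IsValidTable u' v' w') :
    (Submodule.span ℝ {(![1,-2,1] : Fin 3 → ℝ)} : Set (Fin 3 → ℝ)) ⊆
      closure (Xset u' v' w') ∧
    (Submodule.span ℝ {(![1,0,3] : Fin 3 → ℝ)} : Set (Fin 3 → ℝ)) ⊆
      closure (Xset u' v' w') := by
  obtain ⟨hdisj, hTY⟩ := hvalid
  have hA : ∀ p ∈ Xset u' v' w', (T*R).mulVec p ∈ Xset u' v' w' := by
    intro p hp
    rw [← Matrix.mulVec_mulVec]
    exact hTY ⟨R.mulVec p, Or.inl (Or.inl ⟨p, hp, rfl⟩), rfl⟩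
  have hB : ∀ p ∈ Xset u' v' w', (T*R^3).mulVec p ∈ Xset u' v' w' := by
    intro p hp
    rw [← Matrix.mulVec_mulVec]
    exact hTY ⟨(R^3).mulVec p, Or.inr ⟨p, hp, rfl⟩, rfl⟩
  have hN2A : ∀ p : Fin 3 → ℝ, (T*R - 1).mulVec ((T*R - 1).mulVec p)
      = ((![1,1,1] : Fin 3 → ℝ) ⬝ᵥ p) • (![1,-2,1] : Fin 3 → ℝ) := by
    intro p
    funext j
    fin_cases j <;>
      simp [T, R, Matrix.mulVec, dotProduct, Fin.sum_univ_three, Matrix.sub_apply,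
        Matrix.mul_apply, Matrix.one_apply] <;> ring
  have hNuA : (T*R - 1).mulVec (![1,-2,1] : Fin 3 → ℝ) = 0 := by
    funext j
    fin_cases j <;>
      simp [T, R, Matrix.mulVec, dotProduct, Fin.sum_univ_three, Matrix.sub_apply,
        Matrix.mul_apply, Matrix.one_apply] <;> ring
  have hN2B : ∀ p : Fin 3 → ℝ, (T*R^3 - 1).mulVec ((T*R^3 - 1).mulVec p)
      = ((![3,-1,-1] : Fin 3 → ℝ) ⬝ᵥ p) • (![1,0,3] : Fin 3 → ℝ) := by
    intro p
    funext j
    fin_cases j <;>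
      simp [T, R, pow_succ, Matrix.mulVec, dotProduct, Fin.sum_univ_three,
        Matrix.sub_apply, Matrix.mul_apply, Matrix.one_apply] <;> ring
  have hNuB : (T*R^3 - 1).mulVec (![1,0,3] : Fin 3 → ℝ) = 0 := by
    funext j
    fin_cases j <;>
      simp [T, R, pow_succ, Matrix.mulVec, dotProduct, Fin.sum_univ_three,
        Matrix.sub_apply, Matrix.mul_apply, Matrix.one_apply] <;> ring
  constructor
  · obtain ⟨x, hx, hcx⟩ := exists_good u' v' w' hind ![1,1,1] (by
      intro h
      have := congrFun h 0
      norm_num at this)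
    exact line_subset_closureX u' v' w' (T*R) _ _ hA hN2A hNuA x hx hcx
  · obtain ⟨x, hx, hcx⟩ := exists_good u' v' w' hind ![3,-1,-1] (by
      intro h
      have := congrFun h 0
      norm_num at this)
    exact line_subset_closureX u' v' w' (T*R^3) _ _ hB hN2B hNuB x hx hcx
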